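/- arXiv:2408.05491 — 2 statements merged into one kernel-verified Lean document; each statement's English description precedes it below -/
import Mathlib

section
/- In the leader-election process of the previous statement, A_m = {ℓ*}, where ℓ* is the unique element of S maximal in the order: ℓ₁ ≺ ℓ₂ iff at the smallest bit index j where they differ, Nat.testBit ℓ₂ j = true. -/
/-- ℓ₁ ≺ ℓ₂ : at the smallest bit index where ℓ₁ and ℓ₂ differ, ℓ₂ has bit 1. -/
def bitPrec (ℓ₁ ℓ₂ : ℕ) : Prop :=
  ∃ j, (∀ i < j, Nat.testBit ℓ₁ i = Nat.testBit ℓ₂ i) ∧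
    Nat.testBit ℓ₁ j ≠ Nat.testBit ℓ₂ j ∧ Nat.testBit ℓ₂ j = true

/-- The survivor of the leader-election process is exactly the maximum of S
with respect to the lowest-differing-bit order ≺. -/
theorem stmt_11 (m : ℕ) (S : Finset ℕ) (hne : S.Nonempty)
    (hS : ∀ ℓ ∈ S, ℓ < 2 ^ m) (A : ℕ → Finset ℕ) (hA0 : A 0 = S)
    (hAs : ∀ j, A (j + 1) ⊆ A j)
    (hsame : ∀ j, (∀ ℓ₁ ∈ A j, ∀ ℓ₂ ∈ A j,
        Nat.testBit ℓ₁ j = Nat.testBit ℓ₂ j) → A (j + 1) = A j)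
    (hsplit : ∀ j, ¬ (∀ ℓ₁ ∈ A j, ∀ ℓ₂ ∈ A j,
        Nat.testBit ℓ₁ j = Nat.testBit ℓ₂ j) →
        A (j + 1) = (A j).filter (fun ℓ => Nat.testBit ℓ j = true)) :
    ∃ ℓstar ∈ S, A m = {ℓstar} ∧ ∀ ℓ ∈ S, ℓ ≠ ℓstar → bitPrec ℓ ℓstar := by
  -- chain of inclusions
  have hchain : ∀ i j : ℕ, i ≤ j → A j ⊆ A i := by
    intro i j hij
    induction j with
    | zero => simp [Nat.le_zero.mp hij]
    | succ k ih =>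
      rcases Nat.lt_or_ge i (k+1) with h | h
      · exact (hAs k).trans (ih (Nat.lt_succ_iff.mp h))
      · have : i = k + 1 := le_antisymm hij h
        simp [this]
  -- nonemptiness
  have hnonempty : ∀ j, (A j).Nonempty := by
    intro j
    induction j with
    | zero => simpa [hA0] using hne
    | succ k ih =>
      by_cases h : ∀ ℓ₁ ∈ A k, ∀ ℓ₂ ∈ A k, Nat.testBit ℓ₁ k = Nat.testBit ℓ₂ k
      · rw [hsame k h]; exact ih
      · rw [hsplit k h]
        push_neg at h
        obtain ⟨ℓ₁, h1, ℓ₂, h2, hne12⟩ := h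
        rcases Bool.eq_false_or_eq_true (Nat.testBit ℓ₁ k) with hb | hb
        · exact ⟨ℓ₁, Finset.mem_filter.mpr ⟨h1, hb⟩⟩
        · refine ⟨ℓ₂, Finset.mem_filter.mpr ⟨h2, ?_⟩⟩
          cases hb2 : Nat.testBit ℓ₂ k
          · exact absurd (hb.trans hb2.symm) hne12
          · rfl
  -- elements of A (i+1) agree on bit i
  have hagree : ∀ i, ∀ ℓ₁ ∈ A (i+1), ∀ ℓ₂ ∈ A (i+1),
      Nat.testBit ℓ₁ i = Nat.testBit ℓ₂ i := by
    intro i ℓ₁ h1 ℓ₂ h2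
    by_cases h : ∀ ℓ₁ ∈ A i, ∀ ℓ₂ ∈ A i, Nat.testBit ℓ₁ i = Nat.testBit ℓ₂ i
    · exact h ℓ₁ (hAs i h1) ℓ₂ (hAs i h2)
    · rw [hsplit i h] at h1 h2
      rw [(Finset.mem_filter.mp h1).2, (Finset.mem_filter.mp h2).2]
  obtain ⟨ℓstar, hstar⟩ := hnonempty m
  have hstarS : ℓstar ∈ S := by rw [← hA0]; exact hchain 0 m (Nat.zero_le m) hstar
  -- A m is a singleton
  have hsingle : A m = {ℓstar} := by
    apply Finset.eq_singleton_iff_unique_mem.mpr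
    refine ⟨hstar, fun x hx => ?_⟩
    apply Nat.eq_of_testBit_eq
    intro i
    rcases Nat.lt_or_ge i m with him | him
    · exact hagree i x (hchain (i+1) m him hx) ℓstar (hchain (i+1) m him hstar)
    · have hx2 : x < 2 ^ i := lt_of_lt_of_le (hS x (by rw [← hA0]; exact hchain 0 m (Nat.zero_le m) hx))
        (Nat.pow_le_pow_right (by norm_num) him)
      have hs2 : ℓstar < 2 ^ i := lt_of_lt_of_le (hS ℓstar hstarS)
        (Nat.pow_le_pow_right (by norm_num) him)
      rw [Nat.testBit_lt_two_pow hx2, Nat.testBit_lt_two_pow hs2]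
  refine ⟨ℓstar, hstarS, hsingle, ?_⟩
  intro ℓ hℓ hℓne
  have hexj : ∃ j, Nat.testBit ℓ j ≠ Nat.testBit ℓstar j := by
    by_contra h
    push_neg at h
    exact hℓne (Nat.eq_of_testBit_eq h)
  classical
  set j := Nat.find hexj with hj
  have hjdiff : Nat.testBit ℓ j ≠ Nat.testBit ℓstar j := Nat.find_spec hexj
  have hjmin : ∀ i < j, Nat.testBit ℓ i = Nat.testBit ℓstar i := by
    intro i hi
    by_contra h
    exact absurd (Nat.find_le h) (not_le.mpr hi)
  have hjm : j < m := by
    by_contra h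
    push_neg at h
    apply hjdiff
    have hx2 : ℓ < 2 ^ j := lt_of_lt_of_le (hS ℓ hℓ) (Nat.pow_le_pow_right (by norm_num) h)
    have hs2 : ℓstar < 2 ^ j := lt_of_lt_of_le (hS ℓstar hstarS) (Nat.pow_le_pow_right (by norm_num) h)
    rw [Nat.testBit_lt_two_pow hx2, Nat.testBit_lt_two_pow hs2]
  -- ℓ survives up to stage j
  have hmemk : ∀ k ≤ j, ℓ ∈ A k := by
    intro k hk
    induction k with
    | zero => rw [hA0]; exact hℓ
    | succ i ih =>
      have hik : i ≤ j := Nat.le_of_succ_le hk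
      have hℓi : ℓ ∈ A i := ih hik
      by_cases h : ∀ ℓ₁ ∈ A i, ∀ ℓ₂ ∈ A i, Nat.testBit ℓ₁ i = Nat.testBit ℓ₂ i
      · rw [hsame i h]; exact hℓi
      · rw [hsplit i h]
        have hstari : ℓstar ∈ A (i+1) := hchain (i+1) m (by omega) hstar
        have hbit : Nat.testBit ℓstar i = true := by
          have := hsplit i h
          rw [this] at hstari
          exact (Finset.mem_filter.mp hstari).2
        refine Finset.mem_filter.mpr ⟨hℓi, ?_⟩
        rw [hjmin i (by omega), hbit]
  have hℓj : ℓ ∈ A j := hmemk j le_rfl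
  have hstarj : ℓstar ∈ A j := hchain j m (by omega) hstar
  have hnot : ¬ ∀ ℓ₁ ∈ A j, ∀ ℓ₂ ∈ A j, Nat.testBit ℓ₁ j = Nat.testBit ℓ₂ j := by
    intro h
    exact hjdiff (h ℓ hℓj ℓstar hstarj)
  have hstarj1 : ℓstar ∈ A (j+1) := hchain (j+1) m (by omega) hstar
  rw [hsplit j hnot] at hstarj1
  exact ⟨j, hjmin, hjdiff, (Finset.mem_filter.mp hstarj1).2⟩
end

section
/- Let k robots with labels from {0,...,L} start at one vertex of an n-cycle (n ≥ k), with each robot's moves determined solely by its label. If the robots can occupy k distinct vertices after y rounds, then y must satisfy both 2y + 1 ≥ k and 3^y ≥ k; hence y ≥ max((k-1)/2, log₃ k). -/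
/-- Combined lower bound: if the k robots with labels 0,…,k-1 (moves determined
solely by the label, entries in {-1,0,1}) start at a common node of an n-cycle
(n ≥ k) and occupy k pairwise distinct nodes after y rounds, then both
k ≤ 2y + 1 and k ≤ 3^y hold. -/
theorem stmt_19 (n k y : ℕ) (hn : k ≤ n) (s : ZMod n)
    (f : ℕ → Fin y → ℤ)
    (hf : ∀ ℓ, ∀ j, f ℓ j = -1 ∨ f ℓ j = 0 ∨ f ℓ j = 1)
    (hdisp : ∀ ℓ₁ < k, ∀ ℓ₂ < k, ℓ₁ ≠ ℓ₂ →
      s + ((∑ j, f ℓ₁ j : ℤ) : ZMod n) ≠ s + ((∑ j, f ℓ₂ j : ℤ) : ZMod n)) :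
    k ≤ 2 * y + 1 ∧ k ≤ 3 ^ y := by
  -- sums are injective on labels < k
  have hsum : ∀ ℓ₁ < k, ∀ ℓ₂ < k, ℓ₁ ≠ ℓ₂ →
      (∑ j, f ℓ₁ j : ℤ) ≠ (∑ j, f ℓ₂ j : ℤ) := by
    intro ℓ₁ h₁ ℓ₂ h₂ hne heq
    exact hdisp ℓ₁ h₁ ℓ₂ h₂ hne (by rw [heq])
  constructor
  · -- map into Icc (-y) y
    have hcard := Finset.card_le_card_of_injOn (f := fun ℓ => (∑ j, f ℓ j : ℤ))
      (s := Finset.range k) (t := Finset.Icc (-(y : ℤ)) y)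
      (by
        intro ℓ hℓ
        simp only [Finset.mem_coe, Finset.mem_Icc]
        constructor
        · have : -(∑ j, f ℓ j) ≤ (y : ℤ) := by
            rw [← Finset.sum_neg_distrib]
            calc (∑ j, -f ℓ j) ≤ ∑ _j : Fin y, (1 : ℤ) := by
                  apply Finset.sum_le_sum
                  intro j _
                  rcases hf ℓ j with h | h | h <;> simp [h]
              _ = y := by simp
          linarith
        · calc (∑ j, f ℓ j) ≤ ∑ _j : Fin y, (1 : ℤ) := by
                apply Finset.sum_le_sum
                intro j _
                rcases hf ℓ j with h | h | h <;> simp [h]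
            _ = y := by simp)
      (by
        intro a ha b hb hab
        by_contra hne
        exact hsum a (Finset.mem_range.mp ha) b (Finset.mem_range.mp hb) hne hab)
    have : ((y : ℤ) + 1 + y).toNat = 2 * y + 1 := by omega
    simpa [Int.card_Icc, this] using hcard
  · -- map into piFinset {-1,0,1}
    have hcard := Finset.card_le_card_of_injOn (f := fun ℓ => f ℓ)
      (s := Finset.range k)
      (t := Fintype.piFinset (fun _ : Fin y => ({-1, 0, 1} : Finset ℤ)))
      (by
        intro ℓ _
        simp only [Finset.mem_coe, Fintype.mem_piFinset, Finset.mem_insert, Finset.mem_singleton]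
        exact hf ℓ)
      (by
        intro a ha b hb hab
        by_contra hne
        exact hsum a (Finset.mem_range.mp ha) b (Finset.mem_range.mp hb) hne
          (by simp only at hab; rw [hab]))
    simpa using hcard
end
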